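/- arXiv:1909.12036 — 2 statements merged into one kernel-verified Lean document; each statement's English description precedes it below -/
import Mathlib

section
/- Let m > 0, and for 2 ≤ k ≤ N let t_k = 1/(2m+k). If P_k^↓ has density f(z) = 1_{z<1/k}·k(k−1)·C(N,k)·(1−zk)^{k−2}·Σ_{a=0}^{N−k} (−1)^a·C(N−k,a)·(1+az)^{−k} on [0,1/k], then Pr(P_k^↓ > t_k) = k·C(N,k)·Σ_{a=k}^{N} (−1)^{a−k}·C(N−k,a−k)·(1/a)·(2m/(a+2m))^{k−1}. -/
/-!
Integrate the density term by term from `t = 1/(2m+k)` to `1/k`. With `w(z) = (1-zk)/(1+az)`,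
`d/dz w^(k-1) = -(a+k)(k-1)(1-zk)^(k-2)(1+az)^(-k)` and `w(t) = 2m/(a+k+2m)`, which gives the
summands of the right-hand side.

Equating the measure with the integral needs the density to be nonnegative. The alternating sum
`∑ₐ (-1)^a C(n,a) (1+az)^(-k)` is `(-1)^n` times the `n`-th forward difference with step `z` of
the completely monotone function `s ↦ s^(-k)`; its sign follows by induction on `n`, because the
derivative of `(-1)^n Δⁿ s^(-k)` is `-k` times the same quantity for `k+1`, so it is antitone.
-/

open MeasureTheory Finset Set fwdDiff

theorem hasDerivAt_fwdDiff_iter {f f' : ℝ → ℝ} {a h : ℝ} (hh : 0 ≤ h)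
    (hf : ∀ y, a < y → HasDerivAt f (f' y) y) (n : ℕ) {y : ℝ} (hy : a < y) :
    HasDerivAt ((Δ_[h])^[n] f) ((Δ_[h])^[n] f' y) y := by
  induction n generalizing y with
  | zero => exact hf y hy
  | succ n ih =>
    simp only [Function.iterate_succ_apply']
    exact ((ih (by linarith : a < y + h)).comp_add_const y h).sub (ih hy)

theorem neg_one_pow_mul_fwdDiff_iter_zpow_nonneg {h : ℝ} (hh : 0 ≤ h) (n k : ℕ) {c : ℝ}
    (hc : 0 < c) : 0 ≤ (-1) ^ n * (Δ_[h])^[n] (fun s : ℝ => s ^ (-(k : ℤ))) c := by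
  induction n generalizing k c with
  | zero =>
    simp only [pow_zero, one_mul, Function.iterate_zero, id_eq]
    positivity
  | succ n ih =>
    have hderiv : ∀ y, 0 < y → HasDerivAt ((Δ_[h])^[n] fun s : ℝ => s ^ (-(k : ℤ)))
        ((Δ_[h])^[n] ((-(k : ℝ)) • fun s : ℝ => s ^ (-((k + 1 : ℕ) : ℤ))) y) y := by
      refine fun y hy => hasDerivAt_fwdDiff_iter hh (fun y hy => ?_) n hy
      refine (hasDerivAt_zpow (-(k : ℤ)) y (Or.inl hy.ne')).congr_deriv ?_
      simp only [Pi.smul_apply, smul_eq_mul, Int.cast_neg, Int.cast_natCast]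
      push_cast
      ring_nf
    have hanti : AntitoneOn (fun y => (-1) ^ n * (Δ_[h])^[n] (fun s : ℝ => s ^ (-(k : ℤ))) y)
        (Ioi 0) := by
      refine antitoneOn_of_hasDerivWithinAt_nonpos (convex_Ioi 0)
        (fun y hy => ((hderiv y hy).continuousAt.const_mul _).continuousWithinAt)
        (fun y hy => ((hderiv y (interior_subset hy)).const_mul _).hasDerivWithinAt)
        (fun y hy => ?_)
      rw [fwdDiff_iter_const_smul, Pi.smul_apply, smul_eq_mul]
      have := ih (k + 1) (interior_subset hy : (0 : ℝ) < y)
      nlinarith [(Nat.cast_nonneg k : (0 : ℝ) ≤ k)]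
    have := hanti hc (show (0 : ℝ) < c + h by linarith) (by linarith)
    rw [Function.iterate_succ_apply', fwdDiff, pow_succ]
    simp only at this
    linarith

theorem sum_neg_one_pow_mul_choose_mul_inv_pow_nonneg (n k : ℕ) {c x : ℝ} (hc : 0 < c)
    (hx : 0 ≤ x) :
    0 ≤ ∑ a ∈ range (n + 1), (-1 : ℝ) ^ a * (n.choose a) * ((c + a * x) ^ k)⁻¹ := by
  have h := neg_one_pow_mul_fwdDiff_iter_zpow_nonneg hx n k hc
  rw [fwdDiff_iter_eq_sum_shift, mul_sum] at h
  refine h.trans_eq (sum_congr rfl fun a ha => ?_)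
  obtain ⟨b, rfl⟩ : ∃ b, n = a + b := ⟨n - a, by have := mem_range.1 ha; omega⟩
  rw [zsmul_eq_mul, nsmul_eq_mul, zpow_neg, zpow_natCast, Nat.add_sub_cancel_left, pow_add]
  push_cast
  ring_nf
  simp

theorem continuousOn_one_sub_pow_mul_inv_pow (j : ℕ) {a : ℝ} (K : ℝ) (ha : 0 ≤ a) :
    ContinuousOn (fun z => (j + 1) * (1 - z * K) ^ j * ((1 + a * z) ^ (j + 2))⁻¹) (Ici 0) :=
  (by fun_prop : Continuous fun z => (j + 1) * (1 - z * K) ^ j).continuousOn.mul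
    (ContinuousOn.inv₀ (by fun_prop) fun z hz => by have : (0 : ℝ) ≤ z := hz; positivity)

theorem integral_one_sub_pow_mul_inv_pow (j : ℕ) {a K t : ℝ} (ha : 0 ≤ a) (hK : 0 < K)
    (ht : 0 ≤ t) :
    ∫ z in t..1 / K, (j + 1) * (1 - z * K) ^ j * ((1 + a * z) ^ (j + 2))⁻¹
      = ((1 - t * K) / (1 + a * t)) ^ (j + 1) / (a + K) := by
  have hsub : Set.uIcc t (1 / K) ⊆ Ici 0 := fun z hz => (le_min ht (by positivity)).trans hz.1
  have hpos : ∀ z ∈ Set.uIcc t (1 / K), 0 < 1 + a * z := fun z hz => by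
    have : 0 ≤ z := hsub hz
    positivity
  have hderiv : ∀ z ∈ Set.uIcc t (1 / K),
      HasDerivAt (fun z => -((1 - z * K) / (1 + a * z)) ^ (j + 1) / (a + K))
        ((j + 1) * (1 - z * K) ^ j * ((1 + a * z) ^ (j + 2))⁻¹) z := by
    intro z hz
    have hne := (hpos z hz).ne'
    have hq : HasDerivAt (fun z => (1 - z * K) / (1 + a * z)) (-(a + K) / (1 + a * z) ^ 2) z := by
      refine ((((hasDerivAt_id z).mul_const K).const_sub 1).div
        (((hasDerivAt_id z).const_mul a).const_add 1) hne).congr_deriv ?_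
      simp only [id]
      field_simp
      ring
    refine ((hq.pow (j + 1)).neg.div_const (a + K)).congr_deriv ?_
    rw [Nat.add_sub_cancel, div_pow]
    field_simp
    push_cast
    ring
  rw [intervalIntegral.integral_eq_sub_of_hasDerivAt hderiv
    ((continuousOn_one_sub_pow_mul_inv_pow j K ha).mono hsub).intervalIntegrable]
  field_simp
  simp

theorem integral_sum_mul_one_sub_pow_mul_inv_pow (j : ℕ) (s : Finset ℕ) (c : ℕ → ℝ)
    {K t : ℝ} (hK : 0 < K) (ht : 0 ≤ t) :
    ∫ z in t..1 / K, ∑ a ∈ s, c a * ((j + 1) * (1 - z * K) ^ j * ((1 + a * z) ^ (j + 2))⁻¹)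
      = ∑ a ∈ s, c a * (((1 - t * K) / (1 + a * t)) ^ (j + 1) / (a + K)) := by
  have hsub : Set.uIcc t (1 / K) ⊆ Ici 0 := fun z hz => (le_min ht (by positivity)).trans hz.1
  rw [intervalIntegral.integral_finsetSum fun a _ =>
    ((continuousOn_one_sub_pow_mul_inv_pow j K a.cast_nonneg).mono
      hsub).intervalIntegrable.const_mul _]
  refine sum_congr rfl fun a _ => ?_
  rw [intervalIntegral.integral_const_mul, integral_one_sub_pow_mul_inv_pow j a.cast_nonneg hK ht]

theorem setLIntegral_Ioi_ofReal_ite_eq {g : ℝ → ℝ} {t u : ℝ} (ht : 0 ≤ t) (htu : t ≤ u)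
    (hg : ContinuousOn g (Icc t u)) (hg_nonneg : ∀ z ∈ Ioo t u, 0 ≤ g z) :
    ∫⁻ z in Ioi t, ENNReal.ofReal (if 0 < z ∧ z < u then g z else 0)
      = ENNReal.ofReal (∫ z in t..u, g z) := by
  have hind : (fun z => ENNReal.ofReal (if 0 < z ∧ z < u then g z else 0))
      = (Ioo 0 u).indicator fun z => ENNReal.ofReal (g z) := by
    ext z
    by_cases hz : 0 < z ∧ z < u <;> simp [hz]
  rw [hind, setLIntegral_indicator measurableSet_Ioo, Ioo_inter_Ioi, max_eq_right ht,
    intervalIntegral.integral_of_le htu, integral_Ioc_eq_integral_Ioo,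
    ofReal_integral_eq_lintegral_ofReal ((hg.integrableOn_Icc).mono_set Ioo_subset_Icc_self)
      ((ae_restrict_iff' measurableSet_Ioo).2 (ae_of_all _ hg_nonneg))]

theorem stmt14_general {Ω : Type*} [MeasurableSpace Ω] (μ : Measure Ω)
    (N k : ℕ) (hk : 2 ≤ k) (hkN : k ≤ N) (m : ℝ) (hm : 0 < m)
    (P : Ω → ℝ) (hmeas : Measurable P)
    (hP : Measure.map P μ
      = volume.withDensity fun (z : ℝ) => ENNReal.ofReal
          (if 0 < z ∧ z < 1 / (k : ℝ) then
            (k : ℝ) * ((k - 1 : ℕ) : ℝ) * (N.choose k) * (1 - z * k) ^ (k - 2) *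
              ∑ a ∈ Finset.range (N - k + 1),
                (-1 : ℝ) ^ a * ((N - k).choose a) * ((1 + (a : ℝ) * z) ^ k)⁻¹
          else 0)) :
    μ {ω | 1 / (2 * m + k) < P ω}
      = ENNReal.ofReal ((k : ℝ) * (N.choose k) *
          ∑ a ∈ Finset.Icc k N,
            (-1 : ℝ) ^ (a - k) * ((N - k).choose (a - k)) * (1 / (a : ℝ)) *
              (2 * m / ((a : ℝ) + 2 * m)) ^ (k - 1)) := by
  obtain ⟨j, rfl⟩ : ∃ j, k = j + 2 := ⟨k - 2, by omega⟩
  obtain ⟨n, rfl⟩ : ∃ n, N = j + 2 + n := ⟨N - (j + 2), by omega⟩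
  simp only [Nat.add_sub_cancel, Nat.add_sub_cancel_left, show j + 2 - 1 = j + 1 by omega,
    Nat.cast_add, Nat.cast_ofNat, Nat.cast_one] at hP ⊢
  set K : ℝ := j + 2
  set C : ℝ := ↑((j + 2 + n).choose (j + 2))
  have hK : 0 < K := by positivity
  have ht : 0 ≤ 1 / (2 * m + K) := by positivity
  have htu : 1 / (2 * m + K) ≤ 1 / K := one_div_le_one_div_of_le hK (by linarith)
  have hdensity : ∀ z : ℝ, K * (j + 1) * C * (1 - z * K) ^ j *
      ∑ a ∈ range (n + 1), (-1 : ℝ) ^ a * (n.choose a) * ((1 + a * z) ^ (j + 2))⁻¹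
      = ∑ a ∈ range (n + 1), (-1 : ℝ) ^ a * (n.choose a) * (K * C) *
          ((j + 1) * (1 - z * K) ^ j * ((1 + a * z) ^ (j + 2))⁻¹) := fun z => by
    rw [mul_sum]
    exact sum_congr rfl fun a _ => by ring
  rw [show {ω | 1 / (2 * m + K) < P ω} = P ⁻¹' Ioi (1 / (2 * m + K)) from rfl,
    ← Measure.map_apply hmeas measurableSet_Ioi, hP, withDensity_apply _ measurableSet_Ioi,
    setLIntegral_Ioi_ofReal_ite_eq ht htu ?cont ?nonneg]
  case cont =>
    simp_rw [hdensity]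
    exact continuousOn_finsetSum _ fun a _ => continuousOn_const.mul
      ((continuousOn_one_sub_pow_mul_inv_pow j K a.cast_nonneg).mono fun z hz => ht.trans hz.1)
  case nonneg =>
    intro z hz
    have hzK : 0 ≤ 1 - z * K := by linarith [(lt_div_iff₀ hK).1 hz.2]
    exact mul_nonneg (by positivity)
      (sum_neg_one_pow_mul_choose_mul_inv_pow_nonneg n _ one_pos (ht.trans hz.1.le))
  congr 1
  rw [intervalIntegral.integral_congr fun z _ => hdensity z,
    integral_sum_mul_one_sub_pow_mul_inv_pow j _ _ hK ht, ← Finset.Ico_add_one_right_eq_Icc,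
    sum_Ico_eq_sum_range, show j + 2 + n + 1 - (j + 2) = n + 1 by omega, mul_sum]
  refine sum_congr rfl fun a _ => ?_
  rw [Nat.add_sub_cancel_left]
  push_cast
  field_simp
  ring

/-- If P_k^↓ has the stated density, then the probability of relevance is
Pr(P_k^↓ > 1/(2m+k)) = k·C(N,k)·Σ_{a=k}^{N}(−1)^{a−k}·C(N−k,a−k)·(1/a)·(2m/(a+2m))^{k−1}. -/
theorem stmt14 {Ω : Type*} [MeasurableSpace Ω] (μ : Measure Ω) [IsProbabilityMeasure μ]
    (N k : ℕ) (hk : 2 ≤ k) (hkN : k ≤ N) (m : ℝ) (hm : 0 < m)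
    (P : Ω → ℝ) (hmeas : Measurable P)
    (hP : Measure.map P μ
      = volume.withDensity fun (z : ℝ) => ENNReal.ofReal
          (if 0 < z ∧ z < 1 / (k : ℝ) then
            (k : ℝ) * ((k - 1 : ℕ) : ℝ) * (N.choose k) * (1 - z * k) ^ (k - 2) *
              ∑ a ∈ Finset.range (N - k + 1),
                (-1 : ℝ) ^ a * ((N - k).choose a) * ((1 + (a : ℝ) * z) ^ k)⁻¹
          else 0)) :
    μ {ω | 1 / (2 * m + k) < P ω}
      = ENNReal.ofReal ((k : ℝ) * (N.choose k) *
          ∑ a ∈ Finset.Icc k N,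
            (-1 : ℝ) ^ (a - k) * ((N - k).choose (a - k)) * (1 / (a : ℝ)) *
              (2 * m / ((a : ℝ) + 2 * m)) ^ (k - 1)) :=
  stmt14_general μ N k hk hkN m hm P hmeas hP
end

section
/- Under assumptions A1–A3 of the pot-and-ladle model, if party j has renormalized nationwide vote share p_j and in each district k receives seats s_j^k = ⌊p_j^k M_k⌋ with rounding residuals R_j^k = {p_j^k M_k} averaging 1/2 over the c districts, multipliers uncorrelated with district vote shares (Cov(p_j^k, M_k) = 0 over districts), p_j = ⟨p_j^k⟩, and the multipliers satisfy Σ_{j=1}^n ⌊p_j^k M_k⌋ = m_k (all seats to the n relevant parties), then the total number of seats of party j equals s_j = p_j·s + p_j·(cn/2) − c/2, where s is the total number of seats. -/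
/-- The pot-and-ladle seat-allocation formula: under assumptions A1–A3 of the
Jefferson–D'Hondt model (rounding residuals averaging 1/2, multipliers uncorrelated with
district vote shares, nationwide shares equal to average district shares, and all seats
going to the n relevant parties), party j's nationwide seat total equals
s_j = p_j·s + p_j·(cn/2) − c/2. -/
theorem stmt19 (c n : ℕ) (hc : 0 < c) (hn : 0 < n)
    (mag : Fin c → ℕ) (s : ℕ) (hs : s = ∑ k, mag k)
    (p : Fin n → ℝ) (pd : Fin n → Fin c → ℝ) (M : Fin c → ℝ)
    (hM : ∀ k, 0 < M k)
    (hpd : ∀ j k, 0 ≤ pd j k)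
    (hsum1 : ∀ k, ∑ j, pd j k = 1)
    -- A1a: rounding residuals average 1/2 over districts
    (hres : ∀ j, (∑ k, Int.fract (pd j k * M k)) / c = 1 / 2)
    -- A1b: multipliers uncorrelated with district vote shares
    (hcov : ∀ j, (∑ k, pd j k * M k) / c - ((∑ k, pd j k) / c) * ((∑ k, M k) / c) = 0)
    -- A3: nationwide share equals the average district share
    (hp : ∀ j, p j = (∑ k, pd j k) / c)
    -- A2: all of each district's seats go to the n relevant parties
    (hall : ∀ k, ∑ j, ⌊pd j k * M k⌋ = (mag k : ℤ)) :
    ∀ j, ((∑ k, ⌊pd j k * M k⌋ : ℤ) : ℝ)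
      = p j * s + p j * ((c : ℝ) * n / 2) - (c : ℝ) / 2 := by
  have hc' : (c : ℝ) ≠ 0 := Nat.cast_ne_zero.mpr hc.ne'
  -- sum of residuals for each party is c/2
  have hres' : ∀ j, (∑ k, Int.fract (pd j k * M k)) = (c : ℝ) / 2 := by
    intro j
    have := hres j
    field_simp at this ⊢
    linarith
  -- floor sum as real: Σ⌊⌋ = Σ p M − c/2
  have hfl : ∀ j, ((∑ k, ⌊pd j k * M k⌋ : ℤ) : ℝ)
      = (∑ k, pd j k * M k) - (c : ℝ) / 2 := by
    intro j
    rw [← hres' j]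
    push_cast
    rw [← Finset.sum_sub_distrib]
    congr 1
    ext k
    rw [Int.self_sub_fract]
  -- covariance zero: Σ pd j k M k = p j * Σ M
  have hcv : ∀ j, (∑ k, pd j k * M k) = p j * (∑ k, M k) := by
    intro j
    have h := hcov j
    have h2 : (∑ k, pd j k * M k) / c = (∑ k, pd j k) / c * ((∑ k, M k) / c) := by
      linarith
    rw [hp j]
    calc ∑ k, pd j k * M k = ((∑ k, pd j k * M k) / c) * c := by field_simp
      _ = ((∑ k, pd j k) / c * ((∑ k, M k) / c)) * c := by rw [h2]
      _ = (∑ k, pd j k) / c * (∑ k, M k) := by field_simp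
  -- total seats: Σ M = s + c n / 2
  have hMsum : (∑ k, M k) = (s : ℝ) + (c : ℝ) * n / 2 := by
    have h1 : ((∑ k, (mag k : ℤ)) : ℝ) = ∑ j, ((∑ k, ⌊pd j k * M k⌋ : ℤ) : ℝ) := by
      push_cast
      rw [Finset.sum_comm]
      congr 1; ext k
      exact_mod_cast (hall k).symm
    have h2 : ∀ j : Fin n, ((∑ k, ⌊pd j k * M k⌋ : ℤ) : ℝ)
        = (∑ k, pd j k * M k) - (c : ℝ) / 2 := hfl
    have h3 : ∑ j, ((∑ k, pd j k * M k) - (c : ℝ) / 2)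
        = (∑ k, M k) - (n : ℝ) * ((c : ℝ) / 2) := by
      rw [Finset.sum_sub_distrib, Finset.sum_const, Finset.card_univ, Fintype.card_fin,
        nsmul_eq_mul, Finset.sum_comm]
      congr 1
      refine Finset.sum_congr rfl ?_
      intro k _
      rw [← Finset.sum_mul, hsum1 k, one_mul]
    have h4 : ((s : ℤ) : ℝ) = (∑ k, M k) - (n : ℝ) * ((c : ℝ) / 2) := by
      rw [hs]
      push_cast [← h3]
      rw [← Finset.sum_congr rfl (fun j _ => h2 j)]
      exact_mod_cast h1
    push_cast at h4
    linarith
  intro j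
  rw [hfl j, hcv j, hMsum]
  ring
end
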